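/- arXiv:1107.3343 — 5 statements merged into one kernel-verified Lean document; each statement's English description precedes it below -/
import Mathlib

section
/- For a 2-form B on a smooth manifold M, the bundle automorphism τ_B(X,α) = (X, α + i_X B) of TM ⊕ T*M preserves the Courant bracket ⟦(X,α),(Y,β)⟧ = ([X,Y], L_X β − i_Y dα) if and only if dB = 0. -/
/-!
Algebraic model of a smooth manifold `M`: `R` is its commutative `ℝ`-algebra of
smooth functions `C^∞(M)`, vector fields are derivations of `R` (with the usual
Lie bracket of vector fields given by the commutator), `1`-forms are `R`-linear
functionals on vector fields, and `2`-forms are skew-symmetric `R`-bilinear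
forms on vector fields.  Exterior derivatives, Lie derivatives and interior
products are given by the usual Cartan formulas.
-/

variable {R : Type*} [CommRing R] [Algebra ℝ R]

/-- Vector fields on `M`. -/
abbrev Vec (R : Type*) [CommRing R] [Algebra ℝ R] := Derivation ℝ R R

/-- `1`-forms on `M`. -/
abbrev Form1 (R : Type*) [CommRing R] [Algebra ℝ R] := Vec R →ₗ[R] R

/-- The Courant bracket `⟦(X,α),(Y,β)⟧ = ([X,Y], L_X β − i_Y dα)` on sections of
`𝕋M = TM ⊕ T*M`, written out pointwise via the Cartan formulas
`(L_X β)(Z) = X(β(Z)) − β([X,Z])` and `dα(Y,Z) = Y(α(Z)) − Z(α(Y)) − α([Y,Z])`. -/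
def Cour (p q : Vec R × (Vec R → R)) : Vec R × (Vec R → R) :=
  (⁅p.1, q.1⁆,
    fun Z => p.1 (q.2 Z) - q.2 ⁅p.1, Z⁆ -
      (q.1 (p.2 Z) - Z (p.2 q.1) - p.2 ⁅q.1, Z⁆))

/-- The exterior derivative of a `2`-form `B` (given via `B^♯ : X ↦ B(X,·)`),
evaluated on vector fields `X, Y, Z` by the Cartan formula. -/
def dCartan (B : Vec R →ₗ[R] Form1 R) (X Y Z : Vec R) : R :=
  X (B Y Z) - Y (B X Z) + Z (B X Y) -
    B ⁅X, Y⁆ Z + B ⁅X, Z⁆ Y - B ⁅Y, Z⁆ X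

/-- The `B`-field transformation `τ_B(X,α) = (X, α + i_X B)`. -/
def tauBv (B : Vec R →ₗ[R] Form1 R) (p : Vec R × (Vec R → R)) :
    Vec R × (Vec R → R) :=
  (p.1, fun Z => p.2 Z + B p.1 Z)

theorem cour_tauBv_tauBv (B : Vec R →ₗ[R] Form1 R) (hB : ∀ X Y : Vec R, B X Y = - B Y X)
    (p q : Vec R × (Vec R → R)) :
    Cour (tauBv B p) (tauBv B q) = tauBv B (Cour p q) + (0, dCartan B p.1 q.1) := by
  refine Prod.ext (add_zero _).symm (funext fun Z => ?_)
  simp only [Cour, tauBv, dCartan, Prod.snd_add, Pi.add_apply, map_add]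
  linear_combination hB ⁅q.1, Z⁆ p.1 - hB ⁅p.1, Z⁆ q.1

theorem tauBv_cour_eq_iff (B : Vec R →ₗ[R] Form1 R) (hB : ∀ X Y : Vec R, B X Y = - B Y X)
    (p q : Vec R × (Vec R → R)) :
    tauBv B (Cour p q) = Cour (tauBv B p) (tauBv B q) ↔ dCartan B p.1 q.1 = 0 := by
  rw [cour_tauBv_tauBv B hB, left_eq_add, Prod.mk_eq_zero]
  exact and_iff_right rfl

/-- For a `2`-form `B` on `M`, the bundle automorphism `τ_B(X,α) = (X, α + i_X B)`
of `TM ⊕ T*M` preserves the Courant bracket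
`⟦(X,α),(Y,β)⟧ = ([X,Y], L_X β − i_Y dα)` if and only if `dB = 0`. -/
theorem tauB_preserves_courant_iff_closed
    (B : Vec R →ₗ[R] Form1 R) (hB : ∀ X Y : Vec R, B X Y = - B Y X) :
    (∀ (X Y : Vec R) (α β : Form1 R),
        tauBv B (Cour (X, fun Z => α Z) (Y, fun Z => β Z)) =
          Cour (tauBv B (X, fun Z => α Z)) (tauBv B (Y, fun Z => β Z))) ↔
      (∀ X Y Z : Vec R, dCartan B X Y Z = 0) := by
  simp only [tauBv_cour_eq_iff B hB]
  exact ⟨fun h X Y => congrFun (h X Y 0 0), fun h X Y _ _ => funext (h X Y)⟩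
end

section
/- For vector fields X, Y on M, 1-forms α, β, and a closed 2-form B on M, one has ⟦(X, α + i_X B),(Y, β + i_Y B)⟧ = ([X,Y], L_X β − i_Y dα + i_{[X,Y]} B). In other words, τ_B applied to the Courant bracket of (X,α) and (Y,β) equals the Courant bracket of τ_B(X,α) and τ_B(Y,β). -/
/-!
Algebraic model of a smooth manifold `M`: `R` is its commutative `ℝ`-algebra of
smooth functions `C^∞(M)`, vector fields are derivations of `R` (with the usual
Lie bracket of vector fields given by the commutator), `1`-forms are `R`-linear
functionals on vector fields, and `2`-forms are skew-symmetric `R`-bilinear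
forms on vector fields.  Exterior derivatives, Lie derivatives and interior
products are given by the usual Cartan formulas.
-/

variable {R : Type*} [CommRing R] [Algebra ℝ R]

/-!
Expanding both sides, the Courant bracket of the transformed pairs differs from the transformed
bracket exactly by the Cartan expression of `dB(X, Y, ·)`, once skew-symmetry of `B` is used to
turn `B(Y, [X,Z])` and `B(X, [Y,Z])` into `B([X,Z], Y)` and `B([Y,Z], X)`. Closedness of `B`
kills this defect.
-/

theorem cour_tauBv_fst (B : Vec R →ₗ[R] Form1 R) (p q : Vec R × (Vec R → R)) :
    (Cour (tauBv B p) (tauBv B q)).1 = (tauBv B (Cour p q)).1 :=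
  rfl

theorem cour_tauBv_snd (B : Vec R →ₗ[R] Form1 R) (hB : ∀ X Y : Vec R, B X Y = - B Y X)
    (p q : Vec R × (Vec R → R)) (Z : Vec R) :
    (Cour (tauBv B p) (tauBv B q)).2 Z = (tauBv B (Cour p q)).2 Z + dCartan B p.1 q.1 Z := by
  simp only [Cour, tauBv, dCartan, map_add]
  linear_combination hB ⁅q.1, Z⁆ p.1 - hB ⁅p.1, Z⁆ q.1

theorem cour_tauBv_of_closed (B : Vec R →ₗ[R] Form1 R) (hB : ∀ X Y : Vec R, B X Y = - B Y X)
    (hdB : ∀ X Y Z : Vec R, dCartan B X Y Z = 0) (p q : Vec R × (Vec R → R)) :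
    Cour (tauBv B p) (tauBv B q) = tauBv B (Cour p q) :=
  Prod.ext (cour_tauBv_fst B p q) <| funext fun Z => by
    rw [cour_tauBv_snd B hB, hdB, add_zero]

/-- For vector fields `X, Y`, `1`-forms `α, β` and a closed `2`-form `B` on `M`,
`⟦(X, α + i_X B),(Y, β + i_Y B)⟧ = ([X,Y], L_X β − i_Y dα + i_{[X,Y]} B)`;
in other words, `τ_B` applied to the Courant bracket of `(X,α)` and `(Y,β)`
equals the Courant bracket of `τ_B(X,α)` and `τ_B(Y,β)`. -/
theorem courant_of_Bfield_images
    (B : Vec R →ₗ[R] Form1 R) (hB : ∀ X Y : Vec R, B X Y = - B Y X)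
    (hdB : ∀ X Y Z : Vec R, dCartan B X Y Z = 0)
    (X Y : Vec R) (α β : Form1 R) :
    Cour (tauBv B (X, fun Z => α Z)) (tauBv B (Y, fun Z => β Z)) =
      tauBv B (Cour (X, fun Z => α Z) (Y, fun Z => β Z)) :=
  cour_tauBv_of_closed B hB hdB _ _
end

section
/- Let ω be a 2-form on M. The graph L_ω of ω^♯ : TM → T*M is involutive under the Courant bracket if and only if dω = 0. -/
/-!
Algebraic model of a smooth manifold `M`: `R` is its commutative `ℝ`-algebra of
smooth functions `C^∞(M)`, vector fields are derivations of `R` (with the usual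
Lie bracket of vector fields given by the commutator), `1`-forms are `R`-linear
functionals on vector fields, and `2`-forms are skew-symmetric `R`-bilinear
forms on vector fields.  Exterior derivatives, Lie derivatives and interior
products are given by the usual Cartan formulas.
-/

variable {R : Type*} [CommRing R] [Algebra ℝ R]

theorem cour_graph_eq_add_dCartan (ω : Vec R →ₗ[R] Form1 R)
    (hω : ∀ X Y : Vec R, ω X Y = - ω Y X) (X Y : Vec R) :
    Cour (X, fun Z => ω X Z) (Y, fun Z => ω Y Z) =
      (⁅X, Y⁆, fun Z => ω ⁅X, Y⁆ Z + dCartan ω X Y Z) := by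
  refine Prod.ext rfl (funext fun Z => ?_)
  simp only [Cour, dCartan]
  -- the four bracket terms cancel in pairs by skew-symmetry
  linear_combination hω X ⁅Y, Z⁆ - hω Y ⁅X, Z⁆

/-- Let `ω` be a `2`-form on `M`.  The graph `L_ω = {(X, i_X ω)}` of
`ω^♯ : TM → T*M` is involutive under the Courant bracket (the bracket of any two
sections of `L_ω` is again a section of `L_ω`) if and only if `dω = 0`. -/
theorem graph_form_involutive_iff_closed
    (ω : Vec R →ₗ[R] Form1 R) (hω : ∀ X Y : Vec R, ω X Y = - ω Y X) :
    (∀ X Y : Vec R,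
        Cour (X, fun Z => ω X Z) (Y, fun Z => ω Y Z) =
          (⁅X, Y⁆, fun Z => ω ⁅X, Y⁆ Z)) ↔
      (∀ X Y Z : Vec R, dCartan ω X Y Z = 0) := by
  simp only [cour_graph_eq_add_dCartan ω hω, Prod.mk.injEq, true_and, funext_iff, add_eq_left]
end

section
/- Let π be a bivector field on M. The graph L_π = {(π^♯(α), α)} is involutive under the Courant bracket if and only if [π,π] = 0, where [·,·] is the Schouten bracket; equivalently, if and only if the bracket {f,g} = π(df,dg) satisfies the Jacobi identity. -/
/-!
Algebraic model of a smooth manifold `M`: `R` is its commutative `ℝ`-algebra of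
smooth functions `C^∞(M)`, vector fields are derivations of `R` (with the usual
Lie bracket of vector fields given by the commutator), `1`-forms are `R`-linear
functionals on vector fields, and `2`-forms are skew-symmetric `R`-bilinear
forms on vector fields.  Exterior derivatives, Lie derivatives and interior
products are given by the usual Cartan formulas.
-/

variable {R : Type*} [CommRing R] [Algebra ℝ R]

/-- The differential of a function: `df(X) = X(f)`. -/
def dR (f : R) : Form1 R where
  toFun X := X f
  map_add' X Y := rfl
  map_smul' c X := rfl

lemma lie_smul' (f : R) (X Y : Vec R) : ⁅X, f • Y⁆ = f • ⁅X, Y⁆ + X f • Y := by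
  ext g
  simp [Derivation.commutator_apply, Derivation.leibniz, smul_eq_mul]

/-- The Lie derivative of a `1`-form: `(L_X β)(Y) = X(β(Y)) − β([X,Y])`. -/
def lieD (X : Vec R) (β : Form1 R) : Form1 R where
  toFun Y := X (β Y) - β ⁅X, Y⁆
  map_add' Y Z := by simp; ring
  map_smul' c Y := by
    simp [lie_smul', smul_eq_mul, Derivation.leibniz]
    ring

/-- The bracket `{f,g} = π(df,dg)` of functions induced by a bivector `π`,
where `π^♯(df)` applied to `g` is `π(df,dg)`. -/
def poissonBr (p : Form1 R →ₗ[R] Vec R) (f g : R) : R := p (dR f) g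


/-!
Involutivity of the graph says exactly that `π^♯` intertwines the Lie bracket of vector fields
with the Koszul bracket `[α,β]_π = L_{π^♯α}β − L_{π^♯β}α + d(α(π^♯β))` of `1`-forms. The defect
`γ([π^♯α, π^♯β] − π^♯[α,β]_π)` is (a multiple of) the Schouten tensor `[π,π](α,β,γ)`: it is
cyclically symmetric by skew-symmetry of `π`, it vanishes for all `γ` as soon as it vanishes for
exact `γ`, and on `(df, dg, dh)` it is the Jacobiator of `{·,·}`. Rotating a general form into the
last slot twice shows that it vanishes identically once it vanishes on exact forms.
-/

@[simp] lemma dR_apply (f : R) (X : Vec R) : dR f X = X f := rfl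

@[simp] lemma lieD_apply (X : Vec R) (β : Form1 R) (Y : Vec R) :
    lieD X β Y = X (β Y) - β ⁅X, Y⁆ := rfl

/-- Cartan's formula `i_Y dα = L_Y α − d(α(Y))` in the second component of the Courant bracket. -/
lemma Cour_snd (X Y : Vec R) (α β : Form1 R) :
    (Cour (X, ⇑α) (Y, ⇑β)).2 = ⇑(lieD X β - lieD Y α + dR (α Y)) := by
  funext Z
  simp only [Cour, LinearMap.add_apply, LinearMap.sub_apply, lieD_apply, dR_apply]
  ring

section

variable (p : Form1 R →ₗ[R] Vec R)

def koszulBr (α β : Form1 R) : Form1 R :=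
  lieD (p α) β - lieD (p β) α + dR (α (p β))

lemma exists_Cour_graph_eq_iff (α β : Form1 R) :
    (∃ γ : Form1 R, Cour (p α, fun Z => α Z) (p β, fun Z => β Z) = (p γ, fun Z => γ Z)) ↔
      ⁅p α, p β⁆ = p (koszulBr p α β) := by
  simp only [Prod.ext_iff]
  constructor
  · rintro ⟨γ, hfst, hsnd⟩
    rw [Cour_snd] at hsnd
    rwa [koszulBr, DFunLike.coe_injective hsnd]
  · intro h
    exact ⟨koszulBr p α β, h, Cour_snd _ _ _ _⟩

def schoutenTensor (α β γ : Form1 R) : R :=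
  γ (⁅p α, p β⁆ - p (koszulBr p α β))

lemma bracket_eq_koszulBr_iff (α β : Form1 R) :
    ⁅p α, p β⁆ = p (koszulBr p α β) ↔ ∀ f : R, schoutenTensor p α β (dR f) = 0 := by
  rw [← sub_eq_zero, Derivation.ext_iff]
  rfl

lemma schoutenTensor_eq_zero_iff_dR (α β : Form1 R) :
    (∀ γ, schoutenTensor p α β γ = 0) ↔ ∀ f : R, schoutenTensor p α β (dR f) = 0 := by
  refine ⟨fun h f => h (dR f), fun h γ => ?_⟩
  rw [schoutenTensor, sub_eq_zero.mpr ((bracket_eq_koszulBr_iff p α β).mpr h), map_zero]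

variable {p} (hp : ∀ α β : Form1 R, β (p α) = -α (p β))
include hp

lemma schoutenTensor_eq (α β γ : Form1 R) :
    schoutenTensor p α β γ =
      γ ⁅p α, p β⁆ - β ⁅p α, p γ⁆ + α ⁅p β, p γ⁆ +
        p α (β (p γ)) - p β (α (p γ)) + p γ (α (p β)) := by
  rw [schoutenTensor, map_sub, hp (koszulBr p α β) γ]
  simp only [koszulBr, LinearMap.add_apply, LinearMap.sub_apply, lieD_apply, dR_apply]
  ring

lemma schoutenTensor_cycle (α β γ : Form1 R) :
    schoutenTensor p β γ α = schoutenTensor p α β γ := by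
  rw [schoutenTensor_eq hp, schoutenTensor_eq hp, hp α γ, hp α β,
    ← lie_skew (p α) (p β), ← lie_skew (p α) (p γ)]
  simp only [map_neg]
  ring

lemma schoutenTensor_dR (f g h : R) :
    schoutenTensor p (dR f) (dR g) (dR h) =
      poissonBr p f (poissonBr p g h) + poissonBr p g (poissonBr p h f) +
        poissonBr p h (poissonBr p f g) := by
  have hfh : p (dR f) h = -p (dR h) f := by simpa using hp (dR f) (dR h)
  rw [schoutenTensor_eq hp]
  simp only [dR_apply, Derivation.commutator_apply, poissonBr, hfh, map_neg]
  ring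

lemma schoutenTensor_eq_zero_of_dR
    (H : ∀ f g h : R, schoutenTensor p (dR f) (dR g) (dR h) = 0) (α β γ : Form1 R) :
    schoutenTensor p α β γ = 0 := by
  have exact_left : ∀ (g h : R) (α : Form1 R), schoutenTensor p (dR g) (dR h) α = 0 :=
    fun g h => (schoutenTensor_eq_zero_iff_dR p _ _).mpr (H g h)
  have exact_right : ∀ (h : R) (α β : Form1 R), schoutenTensor p α β (dR h) = 0 := by
    intro h α β
    rw [schoutenTensor_cycle hp]
    refine (schoutenTensor_eq_zero_iff_dR p _ _).mpr (fun g => ?_) β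
    rw [schoutenTensor_cycle hp]
    exact exact_left g h α
  exact (schoutenTensor_eq_zero_iff_dR p α β).mpr (fun h => exact_right h α β) γ

end

/-- Let `π` be a bivector field on `M`, encoded by the skew map
`π^♯ : T*M → TM`.  The graph `L_π = {(π^♯α, α)}` is involutive under the Courant
bracket if and only if the bracket `{f,g} = π(df,dg)` satisfies the Jacobi
identity (equivalently, `[π,π] = 0` for the Schouten bracket, i.e. `π` is a
Poisson bivector). -/
theorem graph_bivector_involutive_iff_jacobi
    (p : Form1 R →ₗ[R] Vec R)
    (hp : ∀ α β : Form1 R, β (p α) = - α (p β)) :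
    (∀ α β : Form1 R, ∃ γ : Form1 R,
        Cour (p α, fun Z => α Z) (p β, fun Z => β Z) =
          (p γ, fun Z => γ Z)) ↔
      (∀ f g h : R,
        poissonBr p f (poissonBr p g h) + poissonBr p g (poissonBr p h f) +
          poissonBr p h (poissonBr p f g) = 0) := by
  simp only [exists_Cour_graph_eq_iff, bracket_eq_koszulBr_iff, ← schoutenTensor_dR hp]
  constructor
  · intro H f g h
    exact H _ _ h
  · intro H α β h
    exact schoutenTensor_eq_zero_of_dR hp H α β (dR h)
end

section
/- Let (M,π) be a Poisson manifold. The bracket [α,β]_π = L_{π^♯α} β − L_{π^♯β} α − d(π(α,β)) on 1-forms, together with anchor π^♯ : T*M → TM, makes T*M into a Lie algebroid: [·,·]_π is a Lie bracket on Ω¹(M), and the Leibniz rule [α, fβ]_π = f[α,β]_π + (L_{π^♯α} f) β holds. -/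
/-!
Algebraic model of a smooth manifold `M`: `R` is its commutative `ℝ`-algebra of
smooth functions `C^∞(M)`, vector fields are derivations of `R` (with the usual
Lie bracket of vector fields given by the commutator), `1`-forms are `R`-linear
functionals on vector fields, and `2`-forms are skew-symmetric `R`-bilinear
forms on vector fields.  Exterior derivatives, Lie derivatives and interior
products are given by the usual Cartan formulas.
-/

variable {R : Type*} [CommRing R] [Algebra ℝ R]

/-- The Koszul bracket of `1`-forms on a Poisson manifold:
`[α,β]_π = L_{π^♯α} β − L_{π^♯β} α − d(π(α,β))`, where `π(α,β) = β(π^♯ α)`. -/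
def brP (p : Form1 R →ₗ[R] Vec R) (α β : Form1 R) : Form1 R :=
  lieD (p α) β - lieD (p β) α - dR (β (p α))

/-!
Skew-symmetry and the Leibniz rule follow directly from the Cartan formulas and the skewness of
`π`. The heart of the matter is the anchor identity `π^♯[α,β]_π = [π^♯α, π^♯β]`: testing against
Hamiltonian fields `X_f = π^♯ df`, it reduces to `[X_f, X_g] = X_{{f,g}}`, which is the Jacobi
identity of `{·,·}`. Since `1`-forms need not be generated by exact ones, the Jacobi identity of
`[·,·]_π` is not checked on exact forms but directly: with the anchor identity,
`[α,[β,γ]_π]_π = L_{π^♯α}(L_{π^♯β}γ - L_{π^♯γ}β) - L_{[π^♯β,π^♯γ]}α - d(…)`, the Lie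
derivatives cancel in the cyclic sum by `[L_X, L_Y] = L_{[X,Y]}`, and the remaining function
vanishes by one more use of the anchor identity.
-/

section

lemma dR_neg (f : R) : dR (-f) = -dR f := by ext; simp

lemma dR_sub (f g : R) : dR (f - g) = dR f - dR g := by ext; simp

lemma dR_add (f g : R) : dR (f + g) = dR f + dR g := by ext; simp

lemma dR_zero : dR (0 : R) = 0 := by ext; simp

lemma dR_mul (f g : R) : dR (f * g) = f • dR g + g • dR f := by
  ext; simp [Derivation.leibniz]

lemma lieD_sub (X : Vec R) (β γ : Form1 R) : lieD X (β - γ) = lieD X β - lieD X γ := by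
  ext; simp only [lieD_apply, LinearMap.sub_apply, map_sub]; ring

lemma lieD_dR (X : Vec R) (f : R) : lieD X (dR f) = dR (X f) := by
  ext; simp [Derivation.commutator_apply]

lemma lieD_smul_right (X : Vec R) (f : R) (β : Form1 R) :
    lieD X (f • β) = f • lieD X β + X f • β := by
  ext
  simp only [lieD_apply, LinearMap.smul_apply, smul_eq_mul, Derivation.leibniz,
    LinearMap.add_apply]
  ring

lemma lieD_smul_left (f : R) (X : Vec R) (α : Form1 R) :
    lieD (f • X) α = f • lieD X α + α X • dR f := by
  ext Y
  have hlie : ⁅f • X, Y⁆ = f • ⁅X, Y⁆ - Y f • X := by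
    rw [← lie_skew, lie_smul', ← lie_skew X Y]; module
  simp only [lieD_apply, Derivation.coe_smul, Pi.smul_apply, smul_eq_mul, hlie, map_sub, map_smul,
    LinearMap.add_apply, LinearMap.smul_apply, dR_apply]
  ring

lemma lieD_lie (X Y : Vec R) (β : Form1 R) :
    lieD ⁅X, Y⁆ β = lieD X (lieD Y β) - lieD Y (lieD X β) := by
  ext Z
  simp only [lieD_apply, Derivation.commutator_apply, lie_lie, map_sub, LinearMap.sub_apply]
  ring

def IsSkewAnchor (p : Form1 R →ₗ[R] Vec R) : Prop :=
  ∀ α β : Form1 R, β (p α) = -α (p β)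

def PoissonJacobi (p : Form1 R →ₗ[R] Vec R) : Prop :=
  ∀ f g h : R, poissonBr p f (poissonBr p g h) + poissonBr p g (poissonBr p h f) +
    poissonBr p h (poissonBr p f g) = 0

variable {p : Form1 R →ₗ[R] Vec R}

lemma brP_skew (hp : IsSkewAnchor p) (α β : Form1 R) :
    brP p α β = -brP p β α := by
  rw [brP, brP, hp α β, dR_neg]; abel

lemma brP_smul_right (hp : IsSkewAnchor p) (α : Form1 R) (f : R) (β : Form1 R) :
    brP p α (f • β) = f • brP p α β + p α f • β := by
  simp only [brP, map_smul, LinearMap.smul_apply, smul_eq_mul, lieD_smul_right, lieD_smul_left,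
    dR_mul, hp β α]
  module

lemma anchor_apply (hp : IsSkewAnchor p) (α : Form1 R) (f : R) :
    p α f = -α (p (dR f)) :=
  hp α (dR f)

lemma lie_ham_ham (hp : IsSkewAnchor p) (hJac : PoissonJacobi p) (f g : R) :
    ⁅p (dR f), p (dR g)⁆ = p (dR (poissonBr p f g)) := by
  ext h
  have := hJac f g h
  simp only [poissonBr] at this
  rw [anchor_apply hp (dR h) f, dR_apply, map_neg] at this
  rw [Derivation.commutator_apply, anchor_apply hp (dR (poissonBr p f g)) h, dR_apply,
    poissonBr]
  linear_combination this

lemma lie_anchor_ham (hp : IsSkewAnchor p) (hJac : PoissonJacobi p) (α : Form1 R) (f : R) :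
    ⁅p α, p (dR f)⁆ = -p (lieD (p (dR f)) α) := by
  ext g
  rw [Derivation.commutator_apply, Derivation.neg_apply, anchor_apply hp α (p (dR f) g),
    anchor_apply hp α g, anchor_apply hp (lieD _ α), ← poissonBr, ← lie_ham_ham hp hJac, map_neg,
    lieD_apply]
  ring

lemma anchor_brP (hp : IsSkewAnchor p) (hJac : PoissonJacobi p) (α β : Form1 R) :
    p (brP p α β) = ⁅p α, p β⁆ := by
  ext f
  have hβ : α ⁅p β, p (dR f)⁆ = p (dR f) (β (p α)) - β ⁅p (dR f), p α⁆ := by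
    rw [lie_anchor_ham hp hJac β f, map_neg, ← hp, lieD_apply]
  rw [anchor_apply hp, Derivation.commutator_apply, anchor_apply hp β f, anchor_apply hp α f,
    map_neg, map_neg, brP, LinearMap.sub_apply, LinearMap.sub_apply, lieD_apply, lieD_apply,
    dR_apply, hβ, ← lie_skew, map_neg]
  ring

lemma brP_brP (hp : IsSkewAnchor p) (hJac : PoissonJacobi p) (α β γ : Form1 R) :
    brP p α (brP p β γ) = lieD (p α) (lieD (p β) γ - lieD (p γ) β) - lieD ⁅p β, p γ⁆ α -
      dR ((lieD (p β) γ - lieD (p γ) β) (p α)) := by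
  rw [brP, anchor_brP hp hJac β γ, brP, lieD_sub, lieD_dR, LinearMap.sub_apply, dR_sub, dR_apply]
  abel

lemma lieD_anchor_cyclic (hp : IsSkewAnchor p) (hJac : PoissonJacobi p) (α β γ : Form1 R) :
    (lieD (p β) γ - lieD (p γ) β) (p α) + (lieD (p γ) α - lieD (p α) γ) (p β) +
      (lieD (p α) β - lieD (p β) α) (p γ) = 0 := by
  have h : γ ⁅p α, p β⁆ = -brP p α β (p γ) := by rw [← anchor_brP hp hJac]; exact hp _ γ
  simp only [brP, LinearMap.sub_apply, lieD_apply, dR_apply, hp β α, hp α γ, hp γ β,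
    ← lie_skew (p β) (p α), ← lie_skew (p γ) (p β), ← lie_skew (p α) (p γ), map_neg] at h ⊢
  linear_combination 2 * h

lemma brP_jacobi (hp : IsSkewAnchor p) (hJac : PoissonJacobi p) (α β γ : Form1 R) :
    brP p α (brP p β γ) + brP p β (brP p γ α) + brP p γ (brP p α β) = 0 := by
  have h := congrArg dR (lieD_anchor_cyclic hp hJac α β γ)
  rw [dR_add, dR_add, dR_zero] at h
  rw [brP_brP hp hJac, brP_brP hp hJac, brP_brP hp hJac, lieD_lie, lieD_lie, lieD_lie, lieD_sub,
    lieD_sub, lieD_sub]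
  linear_combination (norm := abel) -h

end

/-- Let `(M,π)` be a Poisson manifold (the skew map `π^♯ : T*M → TM` with
`{·,·}` satisfying the Jacobi identity).  The bracket
`[α,β]_π = L_{π^♯α} β − L_{π^♯β} α − d(π(α,β))` on `1`-forms, together with the
anchor `π^♯ : T*M → TM`, makes `T*M` into a Lie algebroid: `[·,·]_π` is a Lie
bracket on `Ω¹(M)` (skew-symmetric and satisfying the Jacobi identity), and the
Leibniz rule `[α, fβ]_π = f[α,β]_π + (L_{π^♯α} f) β` holds. -/
theorem cotangent_lie_algebroid
    (p : Form1 R →ₗ[R] Vec R)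
    (hp : ∀ α β : Form1 R, β (p α) = - α (p β))
    (hJac : ∀ f g h : R,
      poissonBr p f (poissonBr p g h) + poissonBr p g (poissonBr p h f) +
        poissonBr p h (poissonBr p f g) = 0) :
    (∀ α β : Form1 R, brP p α β = - brP p β α) ∧
    (∀ α β γ : Form1 R,
        brP p α (brP p β γ) + brP p β (brP p γ α) + brP p γ (brP p α β) = 0) ∧
    (∀ (α : Form1 R) (f : R) (β : Form1 R),
        brP p α (f • β) = f • brP p α β + p α f • β) :=
  ⟨brP_skew hp, brP_jacobi hp hJac, brP_smul_right hp⟩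
end
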